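/- arXiv:2408.15104 — 3 statements merged into one kernel-verified Lean document; each statement's English description precedes it below -/
import Mathlib

section
/- There exists a unitary operator U₁₂ on ℂ³ ⊗ ℂ³ such that for each i ∈ {0,1,2}, (U₁₂ ⊗ I)|ĩ⟩ = |i⟩ ⊗ |χ⟩, where |χ⟩ = (|00⟩+|11⟩+|22⟩)/√3. Consequently, for every state |ψ⟩ = Σᵢ aᵢ|i⟩ with Σ|aᵢ|² = 1, the encoded state |ψ̃⟩ = Σᵢ aᵢ|ĩ⟩ satisfies (U₁₂ ⊗ I)|ψ̃⟩ = |ψ⟩ ⊗ |χ⟩. -/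
open scoped BigOperators Kronecker
open Matrix

/-- Standard basis vector `|ijk⟩` of `ℂ³ ⊗ ℂ³ ⊗ ℂ³`, with the first two factors grouped. -/
noncomputable def ket3 (i j k : Fin 3) : (Fin 3 × Fin 3) × Fin 3 → ℂ :=
  fun p => if p = ((i, j), k) then 1 else 0

/-- The three-qutrit code vectors `|ĩ⟩`. -/
noncomputable def codeVec : Fin 3 → ((Fin 3 × Fin 3) × Fin 3 → ℂ) :=
  ![((Real.sqrt 3 : ℂ))⁻¹ • (ket3 0 0 0 + ket3 1 1 1 + ket3 2 2 2),
    ((Real.sqrt 3 : ℂ))⁻¹ • (ket3 0 1 2 + ket3 1 2 0 + ket3 2 0 1),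
    ((Real.sqrt 3 : ℂ))⁻¹ • (ket3 0 2 1 + ket3 1 0 2 + ket3 2 1 0)]

/-- `|i⟩ ⊗ |χ⟩` with `|χ⟩ = (|00⟩+|11⟩+|22⟩)/√3` on the last two factors:
component `((a,b),c) ↦ δ_{a i} · χ(b,c)`. -/
noncomputable def recovered (i : Fin 3) : (Fin 3 × Fin 3) × Fin 3 → ℂ :=
  fun p => (if p.1.1 = i then 1 else 0) *
    (((Real.sqrt 3 : ℂ))⁻¹ * (if p.1.2 = p.2 then 1 else 0))

/-- The permutation of two-qutrit basis states implementing the decoder. -/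
def permF : Fin 3 × Fin 3 → Fin 3 × Fin 3 := fun p =>
  ![![((0:Fin 3),(0:Fin 3)),(1,2),(2,1)], ![(2,2),(0,1),(1,0)], ![(1,1),(2,0),(0,2)]] p.1 p.2

/-- Inverse of `permF`. -/
def permInv : Fin 3 × Fin 3 → Fin 3 × Fin 3 := fun p =>
  ![![((0:Fin 3),(0:Fin 3)),(1,1),(2,2)], ![(1,2),(2,0),(0,1)], ![(2,1),(0,2),(1,0)]] p.1 p.2

lemma permF_inj : Function.Injective permF := by decide

lemma permF_permInv : ∀ p, permF (permInv p) = p := by decide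

/-- The permutation matrix `U₁₂`. -/
noncomputable def Umat : Matrix (Fin 3 × Fin 3) (Fin 3 × Fin 3) ℂ :=
  fun p q => if p = permF q then 1 else 0

lemma star_mul_self_U : star Umat * Umat = 1 := by
  ext p q
  simp only [Matrix.mul_apply, Matrix.star_apply, Umat, apply_ite (star : ℂ → ℂ),
    star_one, star_zero, ite_mul, one_mul, zero_mul, Finset.sum_ite_eq, Finset.sum_ite_eq',
    Finset.mem_univ, if_true]
  by_cases h : p = q
  · subst h; simp
  · rw [if_neg (fun hc : permF p = permF q => h (permF_inj hc)), Matrix.one_apply_ne h]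

lemma mulVec_eval (v : (Fin 3 × Fin 3) × Fin 3 → ℂ) (p : (Fin 3 × Fin 3) × Fin 3) :
    ((Umat ⊗ₖ (1 : Matrix (Fin 3) (Fin 3) ℂ)) *ᵥ v) p = v (permInv p.1, p.2) := by
  rw [Matrix.mulVec, dotProduct]
  rw [Finset.sum_eq_single_of_mem (permInv p.1, p.2) (Finset.mem_univ _)]
  · simp [Umat, permF_permInv, Matrix.one_apply]
  · intro q _ hq
    rcases eq_or_ne p.1 (permF q.1) with h1 | h1
    · have hq1 : q.1 = permInv p.1 := by
        apply permF_inj; rw [← h1, permF_permInv]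
      have h2 : p.2 ≠ q.2 := by
        intro h2; exact hq (Prod.ext hq1 h2.symm)
      simp [Umat, Matrix.one_apply, h2]
    · simp [Umat, h1]

set_option maxHeartbeats 2000000 in
lemma code_eval : ∀ (i : Fin 3) (p : (Fin 3 × Fin 3) × Fin 3),
    codeVec i (permInv p.1, p.2) = recovered i p := by
  intro i p
  obtain ⟨⟨a, b⟩, c⟩ := p
  fin_cases i <;> fin_cases a <;> fin_cases b <;> fin_cases c <;>
    simp [codeVec, ket3, recovered, permInv, Prod.ext_iff, Matrix.vecHead, Matrix.vecTail]

/-- There is a unitary `U₁₂` on the first two qutrits with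
`(U₁₂ ⊗ I)|ĩ⟩ = |i⟩ ⊗ |χ⟩` for all `i`, and consequently
`(U₁₂ ⊗ I)|ψ̃⟩ = |ψ⟩ ⊗ |χ⟩` for every encoded state. -/
theorem threeQutrit_recovery :
    ∃ U : Matrix (Fin 3 × Fin 3) (Fin 3 × Fin 3) ℂ,
      U ∈ Matrix.unitaryGroup (Fin 3 × Fin 3) ℂ ∧
      (∀ i : Fin 3, (U ⊗ₖ (1 : Matrix (Fin 3) (Fin 3) ℂ)) *ᵥ codeVec i = recovered i) ∧
      (∀ a : Fin 3 → ℂ, (∑ i, ‖a i‖ ^ 2 = 1) →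
        (U ⊗ₖ (1 : Matrix (Fin 3) (Fin 3) ℂ)) *ᵥ (∑ i, a i • codeVec i)
          = ∑ i, a i • recovered i) := by
  have key : ∀ i : Fin 3,
      (Umat ⊗ₖ (1 : Matrix (Fin 3) (Fin 3) ℂ)) *ᵥ codeVec i = recovered i := by
    intro i; funext p; rw [mulVec_eval, code_eval]
  refine ⟨Umat, Matrix.mem_unitaryGroup_iff'.mpr star_mul_self_U, key, ?_⟩
  intro a _
  funext p
  rw [mulVec_eval]
  simp only [Finset.sum_apply, Pi.smul_apply]
  refine Finset.sum_congr rfl fun i _ => ?_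
  rw [← key i, mulVec_eval]
end

section
/- For the three-qutrit code, the reduced density matrix of the third qutrit of any encoded state |ψ̃⟩ = Σᵢ aᵢ|ĩ⟩ (with Σ|aᵢ|² = 1) equals the maximally mixed state I/3, independent of the coefficients aᵢ. -/
open scoped BigOperators
open Matrix

/-- Outer product `|ψ⟩⟨ψ|`. -/
noncomputable def outer (ψ : (Fin 3 × Fin 3) × Fin 3 → ℂ) :
    Matrix ((Fin 3 × Fin 3) × Fin 3) ((Fin 3 × Fin 3) × Fin 3) ℂ :=
  fun p q => ψ p * star (ψ q)

/-- Partial trace over the first two qutrits. -/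
noncomputable def ptrace12
    (M : Matrix ((Fin 3 × Fin 3) × Fin 3) ((Fin 3 × Fin 3) × Fin 3) ℂ) :
    Matrix (Fin 3) (Fin 3) ℂ :=
  fun k l => ∑ p : Fin 3 × Fin 3, M (p, k) (p, l)


/-! The code vector `|m̃⟩` is `3^{-1/2} Σᵢ |i, i+m, i+2m⟩`, the uniform superposition of the
arithmetic progressions in `ℤ/3` with common difference `m`. So the amplitude of `|i j k⟩` in
`|ψ̃⟩` is `a_{j-i}/√3` when `(i, j, k)` is a progression and `0` otherwise. Since `(i, j)`
determines the last term `k` of a progression, the reduced matrix is diagonal; and for each `k`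
every difference `m` occurs in exactly one progression ending at `k`, so every diagonal entry is
`Σ |a_m|² / 3`. -/

theorem sum_ite_progression_mul {G R : Type*} [AddCommGroup G] [Fintype G] [DecidableEq G]
    [NonUnitalNonAssocSemiring R] (f g : G → R) (k l : G) :
    ∑ p : G × G, (if k - p.2 = p.2 - p.1 then f (p.2 - p.1) else 0) *
        (if l - p.2 = p.2 - p.1 then g (p.2 - p.1) else 0) =
      if k = l then ∑ m, f m * g m else 0 := by
  split_ifs with hkl
  · subst hkl
    simp only [ite_zero_mul_ite_zero, and_self]
    calc _ = ∑ j, ∑ d, if k - j = d then f d * g d else 0 := by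
          rw [Fintype.sum_prod_type_right]
          exact Fintype.sum_congr _ _ fun j => Equiv.sum_comp (Equiv.subLeft j)
              (fun d => if k - j = d then f d * g d else 0)
      _ = ∑ j, f (k - j) * g (k - j) := by simp only [Finset.sum_ite_eq, Finset.mem_univ, if_true]
      _ = ∑ m, f m * g m := Equiv.sum_comp (Equiv.subLeft k) (fun m => f m * g m)
  · refine Finset.sum_eq_zero fun p _ => ?_
    rw [ite_zero_mul_ite_zero, if_neg]
    rintro ⟨hk, hl⟩
    exact hkl (sub_left_injective (hk.trans hl.symm))

lemma codeVec_apply (m i j k : Fin 3) :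
    codeVec m ((i, j), k) = if j - i = m ∧ k - j = m then (Real.sqrt 3 : ℂ)⁻¹ else 0 := by
  fin_cases m <;> fin_cases i <;> fin_cases j <;> fin_cases k <;>
    simp [codeVec, ket3] <;> decide

lemma sum_smul_codeVec_apply (a : Fin 3 → ℂ) (i j k : Fin 3) :
    (∑ m, a m • codeVec m) ((i, j), k) =
      (Real.sqrt 3 : ℂ)⁻¹ * if k - j = j - i then a (j - i) else 0 := by
  simp only [Finset.sum_apply, Pi.smul_apply, codeVec_apply, smul_eq_mul, mul_ite, mul_zero]
  rw [Finset.sum_eq_single (j - i)]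
  · simp only [true_and]
    split_ifs <;> ring
  · intro m _ hm
    rw [if_neg fun h => hm h.1.symm]
  · simp

lemma inv_sqrt_three_mul_star : (Real.sqrt 3 : ℂ)⁻¹ * star (Real.sqrt 3 : ℂ)⁻¹ = (3 : ℂ)⁻¹ := by
  rw [star_inv₀, Complex.star_def, Complex.conj_ofReal, ← mul_inv, ← Complex.ofReal_mul,
    Real.mul_self_sqrt (by norm_num)]
  norm_num

/-- The reduced density matrix of the third qutrit of any encoded state
`|ψ̃⟩ = Σᵢ aᵢ|ĩ⟩` with `Σ|aᵢ|² = 1` is the maximally mixed state `I/3`. -/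
theorem thirdQutrit_maximallyMixed (a : Fin 3 → ℂ) (h : ∑ i, ‖a i‖ ^ 2 = 1) :
    ptrace12 (outer (∑ i, a i • codeVec i)) = (3 : ℂ)⁻¹ • (1 : Matrix (Fin 3) (Fin 3) ℂ) := by
  have hnorm : ∑ m, a m * star (a m) = 1 := by
    simp only [Complex.star_def, Complex.mul_conj']
    exact_mod_cast h
  ext k l
  calc ptrace12 (outer (∑ i, a i • codeVec i)) k l
      = (Real.sqrt 3 : ℂ)⁻¹ * star (Real.sqrt 3 : ℂ)⁻¹ *
          ∑ p : Fin 3 × Fin 3, (if k - p.2 = p.2 - p.1 then a (p.2 - p.1) else 0) *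
            (if l - p.2 = p.2 - p.1 then star (a (p.2 - p.1)) else 0) := by
        rw [ptrace12, Finset.mul_sum]
        refine Fintype.sum_congr _ _ fun ⟨i, j⟩ => ?_
        simp only [outer, sum_smul_codeVec_apply, star_mul', apply_ite star, star_zero]
        ring
    _ = (3 : ℂ)⁻¹ * if k = l then 1 else 0 := by
        rw [sum_ite_progression_mul a fun m => star (a m), hnorm, inv_sqrt_three_mul_star]
    _ = ((3 : ℂ)⁻¹ • (1 : Matrix (Fin 3) (Fin 3) ℂ)) k l := by
        rw [Matrix.smul_apply, Matrix.one_apply, smul_eq_mul]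
end

section
/- Suppose for a family of orthonormal vectors |ĩj⟩ in H_A ⊗ H_{Ā} there is a unitary U_A on H_A, a decomposition H_A ⊇ H_{A₁} ⊗ H_{A₂} with orthonormal basis |i⟩_{A₁} of H_{A₁}, and orthonormal vectors |χ_j⟩ ∈ H_{A₂} ⊗ H_{Ā} with |ĩj⟩ = (U_A ⊗ I)(|i⟩_{A₁} ⊗ |χ_j⟩). Then for every operator Õ_a defined on span{|ĩj⟩} by Õ_a|ĩj⟩ = Σ_k O^{ki}|k̃j⟩, the operator O_A := U_A (O_{A₁} ⊗ I_{A₂}) U_A†, where O_{A₁}|i⟩ = Σ_k O^{ki}|k⟩, satisfies (O_A ⊗ I_{Ā})|ψ̃⟩ = Õ_a|ψ̃⟩ for all |ψ̃⟩ in the span of the |ĩj⟩. -/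
open scoped BigOperators Kronecker
open Matrix

variable {A₁ A₂ A Ab J : Type*}
  [Fintype A₁] [DecidableEq A₁] [Fintype A₂] [DecidableEq A₂]
  [Fintype A] [DecidableEq A] [Fintype Ab] [DecidableEq Ab]
  [Fintype J] [DecidableEq J]

/-- The vector `|i⟩_{A₁} ⊗ |χ_j⟩_{A₂ Ā}` as a function on `(A₁ × A₂) × Ā`. -/
noncomputable def prodVec (χ : J → (A₂ × Ab → ℂ)) (i : A₁) (j : J) :
    (A₁ × A₂) × Ab → ℂ :=
  fun q => (if q.1.1 = i then 1 else 0) * χ j (q.1.2, q.2)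

/-!
With `V = U_A W` an isometry, `O_A = V (O ⊗ I) V†` satisfies `O_A V = V (O ⊗ I)`, so tensoring
with `I_Ā` it carries each code vector `(V ⊗ I) |i⟩|χ_j⟩` to `(V ⊗ I)(O ⊗ I ⊗ I) |i⟩|χ_j⟩
= Σ_k O^{ki} |k̃j⟩`; linearity extends this to the span.
-/

namespace Matrix

theorem conjTranspose_mul_self_mul_eq_one {m n α : Type*} [Fintype m] [DecidableEq m]
    [DecidableEq n] [Semiring α] [StarRing α] {U : Matrix m m α} {W : Matrix m n α}
    (hU : Uᴴ * U = 1) (hW : Wᴴ * W = 1) :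
    (U * W)ᴴ * (U * W) = 1 := by
  rw [conjTranspose_mul, Matrix.mul_assoc, ← Matrix.mul_assoc Uᴴ, hU, Matrix.one_mul, hW]

theorem mul_mul_conjTranspose_mul_eq_mul {m n α : Type*} [Fintype m] [Fintype n]
    [DecidableEq n] [Semiring α] [Star α] {V : Matrix m n α} (hV : Vᴴ * V = 1)
    (M : Matrix n n α) :
    V * M * Vᴴ * V = V * M := by
  rw [Matrix.mul_assoc, hV, Matrix.mul_one]

theorem kronecker_one_mulVec_kronecker_one_mulVec_of_mul_eq {m n p α : Type*} [Fintype m]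
    [Fintype n] [Fintype p] [DecidableEq p] [CommSemiring α]
    {M : Matrix m m α} {V : Matrix m n α} {N : Matrix n n α} (h : M * V = V * N)
    (x : n × p → α) :
    (M ⊗ₖ (1 : Matrix p p α)) *ᵥ ((V ⊗ₖ (1 : Matrix p p α)) *ᵥ x)
      = (V ⊗ₖ (1 : Matrix p p α)) *ᵥ ((N ⊗ₖ (1 : Matrix p p α)) *ᵥ x) := by
  rw [mulVec_mulVec, mulVec_mulVec, ← mul_kronecker_mul, ← mul_kronecker_mul, h]

end Matrix

theorem kronecker_one_kronecker_one_mulVec_prodVec {l m n ι : Type*}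
    [Fintype l] [DecidableEq l] [Fintype m] [DecidableEq m] [Fintype n] [DecidableEq n]
    (O : Matrix l l ℂ) (χ : ι → (m × n → ℂ)) (i : l) (j : ι) :
    ((O ⊗ₖ (1 : Matrix m m ℂ)) ⊗ₖ (1 : Matrix n n ℂ)) *ᵥ prodVec χ i j
      = ∑ k, O k i • prodVec χ k j := by
  funext ⟨⟨a₁, a₂⟩, b⟩
  simp [mulVec, dotProduct, prodVec, one_apply, Fintype.sum_prod_type, Finset.sum_apply]

theorem reconstruction_operator_exists_general
    (W : Matrix A (A₁ × A₂) ℂ) (hW : Wᴴ * W = 1)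
    (UA : Matrix A A ℂ) (hUA : UA ∈ Matrix.unitaryGroup A ℂ)
    (χ : J → (A₂ × Ab → ℂ))
    (code : A₁ → J → (A × Ab → ℂ))
    (hcode : ∀ i j, code i j = ((UA * W) ⊗ₖ (1 : Matrix Ab Ab ℂ)) *ᵥ prodVec χ i j)
    (O : Matrix A₁ A₁ ℂ) :
    ∃ OA : Matrix A A ℂ,
      OA = UA * (W * (O ⊗ₖ (1 : Matrix A₂ A₂ ℂ)) * Wᴴ) * UAᴴ ∧
      ∀ c : A₁ → J → ℂ,
        (OA ⊗ₖ (1 : Matrix Ab Ab ℂ)) *ᵥ (∑ i, ∑ j, c i j • code i j)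
          = ∑ i, ∑ j, c i j • (∑ k, O k i • code k j) := by
  refine ⟨_, rfl, fun c => ?_⟩
  set V := UA * W
  have hV : Vᴴ * V = 1 :=
    conjTranspose_mul_self_mul_eq_one (mem_unitaryGroup_iff'.mp hUA) hW
  have hOA : UA * (W * (O ⊗ₖ (1 : Matrix A₂ A₂ ℂ)) * Wᴴ) * UAᴴ
      = V * (O ⊗ₖ (1 : Matrix A₂ A₂ ℂ)) * Vᴴ := by
    simp only [V, conjTranspose_mul, Matrix.mul_assoc]
  have hOA_code : ∀ i j, ((V * (O ⊗ₖ (1 : Matrix A₂ A₂ ℂ)) * Vᴴ) ⊗ₖ (1 : Matrix Ab Ab ℂ))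
      *ᵥ code i j = ∑ k, O k i • code k j := by
    intro i j
    simp only [hcode, kronecker_one_mulVec_kronecker_one_mulVec_of_mul_eq
      (mul_mul_conjTranspose_mul_eq_mul hV _),
      kronecker_one_kronecker_one_mulVec_prodVec, mulVec_sum, mulVec_smul, V]
  simp only [hOA, mulVec_sum, mulVec_smul, hOA_code]

/-- Explicit construction of the reconstructing operator
`O_A = U_A (O_{A₁} ⊗ I_{A₂}) U_A†` for the logical operator
`Õ_a |ĩj⟩ = Σ_k O^{ki}|k̃j⟩`, where `|ĩj⟩ = (U_A ⊗ I)(|i⟩_{A₁}|χ_j⟩)` and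
`H_{A₁} ⊗ H_{A₂}` embeds isometrically into `H_A` via `W`. -/
theorem reconstruction_operator_exists
    (W : Matrix A (A₁ × A₂) ℂ) (hW : Wᴴ * W = 1)
    (UA : Matrix A A ℂ) (hUA : UA ∈ Matrix.unitaryGroup A ℂ)
    (χ : J → (A₂ × Ab → ℂ)) (hχ : Orthonormal ℂ fun j => (EuclideanSpace.equiv (A₂ × Ab) ℂ).symm (χ j))
    (code : A₁ → J → (A × Ab → ℂ))
    (hcode : ∀ i j, code i j = ((UA * W) ⊗ₖ (1 : Matrix Ab Ab ℂ)) *ᵥ prodVec χ i j)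
    (O : Matrix A₁ A₁ ℂ) :
    ∃ OA : Matrix A A ℂ,
      OA = UA * (W * (O ⊗ₖ (1 : Matrix A₂ A₂ ℂ)) * Wᴴ) * UAᴴ ∧
      ∀ c : A₁ → J → ℂ,
        (OA ⊗ₖ (1 : Matrix Ab Ab ℂ)) *ᵥ (∑ i, ∑ j, c i j • code i j)
          = ∑ i, ∑ j, c i j • (∑ k, O k i • code k j) :=
  reconstruction_operator_exists_general W hW UA hUA χ code hcode O
end
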